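/- arXiv:1812.07327 — 6 statements merged into one kernel-verified Lean document; each statement's English description precedes it below -/
import Mathlib

section
/- If G_k is obtained from k pairwise vertex-disjoint copies of a finite graph G by adding all edges between vertices in distinct copies, then ρ(G_k) = k·ρ(G), where ρ denotes the Hall ratio. -/
/-!
A subgraph `H` of `G_k` splits into its `k` slices `H_i` (the part of `H` in copy `i`). Each
slice is a subgraph of `G` whose independent sets are independent in `H`, so
`|H| = ∑ |H_i| ≤ ∑ ρ(G) α(H_i) ≤ k ρ(G) α(H)`. Conversely, replacing every vertex of a subgraph
`H` of `G` by its `k` copies multiplies `|V(H)|` by `k` and keeps `α(H)`, because vertices in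
distinct copies are adjacent, so an independent set of the blow-up lies in a single copy.
-/

open scoped BigOperators

namespace Paper

variable {V : Type*}

/-- `s` is an independent set in the graph `G`. -/
def IsIndepSet (G : SimpleGraph V) (s : Set V) : Prop :=
  ∀ ⦃u⦄, u ∈ s → ∀ ⦃v⦄, v ∈ s → ¬ G.Adj u v

/-- `α_w(G)`: the maximum total weight of an independent set of `G`. -/
noncomputable def alphaW (G : SimpleGraph V) [Fintype V] (w : V → ℝ) : ℝ :=
  sSup {x : ℝ | ∃ s : Finset V, IsIndepSet G ↑s ∧ x = ∑ v ∈ s, w v}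

/-- A weight assignment: nonnegative and not identically zero. -/
def IsWeight [Fintype V] (w : V → ℝ) : Prop :=
  (∀ v, 0 ≤ w v) ∧ ∃ v, w v ≠ 0

/-- The fractional chromatic number, as the supremum of `w(V)/α_w(G)`
over all weight assignments `w`. -/
noncomputable def fracChrom (G : SimpleGraph V) [Fintype V] : ℝ :=
  sSup {x : ℝ | ∃ w : V → ℝ, IsWeight w ∧ x = (∑ v, w v) / alphaW G w}

/-- The independence number of `G`. -/
noncomputable def indepNum (G : SimpleGraph V) [Fintype V] : ℕ :=
  sSup {n : ℕ | ∃ s : Finset V, IsIndepSet G ↑s ∧ s.card = n}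

/-- The independence number of a subgraph `H` of `G`. -/
noncomputable def subIndepNum (G : SimpleGraph V) [Fintype V] (H : G.Subgraph) : ℕ :=
  sSup {n : ℕ | ∃ s : Finset V, ↑s ⊆ H.verts ∧
    (∀ ⦃u⦄, u ∈ s → ∀ ⦃v⦄, v ∈ s → ¬ H.Adj u v) ∧ s.card = n}

/-- The Hall ratio: the supremum of `|V(H)|/α(H)` over all nonempty subgraphs `H` of `G`. -/
noncomputable def hallRatio (G : SimpleGraph V) [Fintype V] : ℝ :=
  sSup {x : ℝ | ∃ H : G.Subgraph, H.verts.Nonempty ∧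
    x = (H.verts.ncard : ℝ) / (subIndepNum G H : ℝ)}

/-- The average degree `2|E(G)|/|V(G)|` of a finite graph. -/
noncomputable def avgDeg (G : SimpleGraph V) [Fintype V] : ℝ :=
  2 * (G.edgeSet.ncard : ℝ) / (Fintype.card V : ℝ)

/-- The 1-subdivision of `F` is isomorphic to a subgraph of `G`:
there are injective maps sending vertices of `F` (branch vertices) and edges of `F`
(subdivision vertices) to distinct vertices of `G`, each subdivision vertex being
adjacent in `G` to the images of the two endpoints of its edge. -/
def ContainsSubdiv {W : Type*} (G : SimpleGraph V) (F : SimpleGraph W) : Prop :=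
  ∃ (b : W → V) (s : F.edgeSet → V),
    Function.Injective b ∧ Function.Injective s ∧
    (∀ (e : F.edgeSet) (w : W), b w ≠ s e) ∧
    ∀ (e : F.edgeSet) (w : W), w ∈ (e : Sym2 W) → G.Adj (s e) (b w)

/-- The join of `k` disjoint copies of `G`: `(u,i)` adjacent to `(v,j)` iff
`i ≠ j`, or `i = j` and `uv ∈ E(G)`. -/
def joinCopies (G : SimpleGraph V) (k : ℕ) : SimpleGraph (V × Fin k) where
  Adj x y := x.2 ≠ y.2 ∨ (x.2 = y.2 ∧ G.Adj x.1 y.1)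
  symm := by
    constructor
    rintro ⟨u, i⟩ ⟨v, j⟩ (h | ⟨h, hadj⟩)
    · exact Or.inl (Ne.symm h)
    · exact Or.inr ⟨h.symm, hadj.symm⟩
  loopless := by
    constructor
    rintro ⟨u, i⟩ (h | ⟨-, hadj⟩)
    · exact h rfl
    · exact G.ne_of_adj hadj rfl

section HallRatio

variable {G : SimpleGraph V} [Fintype V]

lemma bddAbove_subIndepNum_set (H : G.Subgraph) :
    BddAbove {n : ℕ | ∃ s : Finset V, ↑s ⊆ H.verts ∧ IsIndepSet H.spanningCoe ↑s ∧ s.card = n} :=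
  ⟨Fintype.card V, by rintro _ ⟨s, -, -, rfl⟩; exact s.card_le_univ⟩

lemma card_le_subIndepNum {H : G.Subgraph} {s : Finset V} (hs : ↑s ⊆ H.verts)
    (hind : IsIndepSet H.spanningCoe ↑s) : s.card ≤ subIndepNum G H :=
  le_csSup (bddAbove_subIndepNum_set H) ⟨s, hs, hind, rfl⟩

lemma exists_card_eq_subIndepNum (H : G.Subgraph) :
    ∃ s : Finset V, ↑s ⊆ H.verts ∧ IsIndepSet H.spanningCoe ↑s ∧ s.card = subIndepNum G H := by
  have hzero : 0 ∈ {n | ∃ s : Finset V, ↑s ⊆ H.verts ∧ IsIndepSet H.spanningCoe ↑s ∧ s.card = n} :=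
    ⟨∅, by simp, by simp [IsIndepSet], rfl⟩
  exact Nat.sSup_mem ⟨0, hzero⟩ (bddAbove_subIndepNum_set H)

lemma one_le_subIndepNum {H : G.Subgraph} (hne : H.verts.Nonempty) : 1 ≤ subIndepNum G H := by
  obtain ⟨v, hv⟩ := hne
  refine card_le_subIndepNum (s := {v}) (by simpa using hv) ?_
  simp only [Finset.coe_singleton]
  rintro u rfl w rfl h
  exact h.ne rfl

variable (G) in
lemma hallRatio_nonneg : 0 ≤ hallRatio G :=
  Real.sSup_nonneg (by rintro _ ⟨H, -, rfl⟩; positivity)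

lemma bddAbove_hallRatio_set :
    BddAbove {x : ℝ | ∃ H : G.Subgraph, H.verts.Nonempty ∧
      x = (H.verts.ncard : ℝ) / (subIndepNum G H : ℝ)} := by
  refine ⟨Fintype.card V, ?_⟩
  rintro _ ⟨H, hne, rfl⟩
  have hα : (1 : ℝ) ≤ subIndepNum G H := by exact_mod_cast one_le_subIndepNum hne
  calc (H.verts.ncard : ℝ) / subIndepNum G H ≤ H.verts.ncard := div_le_self (by positivity) hα
    _ ≤ Fintype.card V := by
      exact_mod_cast (Set.ncard_le_card H.verts).trans_eq Nat.card_eq_fintype_card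

lemma div_subIndepNum_le_hallRatio (H : G.Subgraph) :
    (H.verts.ncard : ℝ) / subIndepNum G H ≤ hallRatio G := by
  rcases H.verts.eq_empty_or_nonempty with hempty | hne
  · simpa [hempty] using hallRatio_nonneg G
  · exact le_csSup bddAbove_hallRatio_set ⟨H, hne, rfl⟩

lemma ncard_le_hallRatio_mul_subIndepNum (H : G.Subgraph) :
    (H.verts.ncard : ℝ) ≤ hallRatio G * subIndepNum G H := by
  rcases H.verts.eq_empty_or_nonempty with hempty | hne
  · simpa [hempty] using mul_nonneg (hallRatio_nonneg G) (Nat.cast_nonneg _)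
  · have hα : (0 : ℝ) < subIndepNum G H := by exact_mod_cast one_le_subIndepNum hne
    exact (div_le_iff₀ hα).mp (div_subIndepNum_le_hallRatio H)

lemma subIndepNum_le_of_embedding {W : Type*} [Fintype W] {G' : SimpleGraph W}
    (H : G.Subgraph) (H' : G'.Subgraph) (f : V ↪ W) (hverts : ∀ v ∈ H.verts, f v ∈ H'.verts)
    (hadj : ∀ u v, H'.Adj (f u) (f v) → H.Adj u v) :
    subIndepNum G H ≤ subIndepNum G' H' := by
  obtain ⟨s, hs, hind, hcard⟩ := exists_card_eq_subIndepNum H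
  rw [← hcard, ← s.card_map f]
  refine card_le_subIndepNum ?_ ?_
  · rw [Finset.coe_map]
    exact Set.MapsTo.image_subset fun v hv => hverts v (hs hv)
  · simp only [Finset.coe_map]
    rintro _ ⟨u, hu, rfl⟩ _ ⟨v, hv, rfl⟩ h
    exact hind hu hv (hadj u v h)

end HallRatio

lemma ncard_eq_sum_ncard_slice {α β : Type*} [Finite α] [Fintype β] (s : Set (α × β)) :
    s.ncard = ∑ b, {a | (a, b) ∈ s}.ncard := by
  classical
  have := Fintype.ofFinite α
  simp only [Set.ncard_eq_toFinset_card']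
  rw [Finset.card_eq_sum_card_fiberwise (f := Prod.snd) (t := Finset.univ) (by simp)]
  refine Finset.sum_congr rfl fun b _ => Finset.card_nbij' Prod.fst (·, b) ?_ ?_ ?_ ?_ <;>
    intro p <;> aesop

section JoinCopies

variable {G : SimpleGraph V} {k : ℕ}

def fiberSubgraph (H : (joinCopies G k).Subgraph) (i : Fin k) : G.Subgraph where
  verts := {v | (v, i) ∈ H.verts}
  Adj u v := H.Adj (u, i) (v, i)
  adj_sub h := ((H.adj_sub h).resolve_left (absurd rfl)).2
  edge_vert h := H.edge_vert h
  symm := ⟨fun _ _ h => H.adj_symm h⟩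

def joinCopiesSubgraph (H : G.Subgraph) (k : ℕ) : (joinCopies G k).Subgraph where
  verts := H.verts ×ˢ Set.univ
  Adj p q := p.1 ∈ H.verts ∧ q.1 ∈ H.verts ∧ (p.2 ≠ q.2 ∨ (p.2 = q.2 ∧ H.Adj p.1 q.1))
  adj_sub := by
    rintro p q ⟨-, -, h | ⟨h, hadj⟩⟩
    exacts [Or.inl h, Or.inr ⟨h, H.adj_sub hadj⟩]
  edge_vert h := ⟨h.1, Set.mem_univ _⟩
  symm := by
    constructor
    rintro p q ⟨hp, hq, h | ⟨h, hadj⟩⟩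
    exacts [⟨hq, hp, Or.inl (Ne.symm h)⟩, ⟨hq, hp, Or.inr ⟨h.symm, hadj.symm⟩⟩]

lemma ncard_joinCopiesSubgraph_verts (H : G.Subgraph) :
    (joinCopiesSubgraph H k).verts.ncard = H.verts.ncard * k := by
  simp [joinCopiesSubgraph, Set.ncard_prod]

variable [Fintype V]

lemma ncard_verts_eq_sum_fiberSubgraph (H : (joinCopies G k).Subgraph) :
    H.verts.ncard = ∑ i, (fiberSubgraph H i).verts.ncard :=
  ncard_eq_sum_ncard_slice H.verts

lemma subIndepNum_fiberSubgraph_le (H : (joinCopies G k).Subgraph) (i : Fin k) :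
    subIndepNum G (fiberSubgraph H i) ≤ subIndepNum (joinCopies G k) H :=
  subIndepNum_le_of_embedding _ H (Function.Embedding.sectL V i) (fun _ hv => hv)
    (fun _ _ h => h)

lemma div_subIndepNum_le_mul_hallRatio (H : (joinCopies G k).Subgraph) :
    (H.verts.ncard : ℝ) / subIndepNum (joinCopies G k) H ≤ k * hallRatio G := by
  have hρ := hallRatio_nonneg G
  refine div_le_of_le_mul₀ (Nat.cast_nonneg _) (by positivity) ?_
  calc (H.verts.ncard : ℝ) = ∑ i, ((fiberSubgraph H i).verts.ncard : ℝ) := by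
        rw [ncard_verts_eq_sum_fiberSubgraph]; push_cast; rfl
    _ ≤ ∑ _i : Fin k, hallRatio G * subIndepNum (joinCopies G k) H := by
        gcongr with i
        refine (ncard_le_hallRatio_mul_subIndepNum _).trans ?_
        gcongr
        exact subIndepNum_fiberSubgraph_le H i
    _ = k * hallRatio G * subIndepNum (joinCopies G k) H := by
        rw [Finset.sum_const, Finset.card_univ, Fintype.card_fin, nsmul_eq_mul, mul_assoc]

lemma subIndepNum_joinCopiesSubgraph [NeZero k] (H : G.Subgraph) :
    subIndepNum (joinCopies G k) (joinCopiesSubgraph H k) = subIndepNum G H := by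
  classical
  refine le_antisymm ?_ (subIndepNum_le_of_embedding H _ (Function.Embedding.sectL V 0)
    (fun _ hv => ⟨hv, Set.mem_univ _⟩) fun _ _ ⟨_, _, h⟩ => (h.resolve_left (absurd rfl)).2)
  obtain ⟨s, hs, hind, hcard⟩ := exists_card_eq_subIndepNum (joinCopiesSubgraph H k)
  have hcopy : Set.InjOn Prod.fst (s : Set (V × Fin k)) := fun p hp q hq hpq =>
    Prod.ext hpq (not_not.mp fun hne => hind hp hq ⟨(hs hp).1, (hs hq).1, Or.inl hne⟩)
  rw [← hcard, ← Finset.card_image_of_injOn hcopy]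
  refine card_le_subIndepNum ?_ ?_
  · rw [Finset.coe_image]
    exact Set.MapsTo.image_subset fun p hp => (hs hp).1
  · simp only [Finset.coe_image]
    rintro _ ⟨p, hp, rfl⟩ _ ⟨q, hq, rfl⟩ h
    exact hind hp hq ⟨(hs hp).1, (hs hq).1, (ne_or_eq p.2 q.2).imp_right (⟨·, h⟩)⟩

lemma mul_div_subIndepNum_le_hallRatio_joinCopies (H : G.Subgraph) :
    k * ((H.verts.ncard : ℝ) / subIndepNum G H) ≤ hallRatio (joinCopies G k) := by
  rcases Nat.eq_zero_or_pos k with rfl | hk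
  · simpa using hallRatio_nonneg _
  have : NeZero k := ⟨hk.ne'⟩
  calc k * ((H.verts.ncard : ℝ) / subIndepNum G H)
      = ((joinCopiesSubgraph H k).verts.ncard : ℝ) /
          subIndepNum (joinCopies G k) (joinCopiesSubgraph H k) := by
        rw [ncard_joinCopiesSubgraph_verts, subIndepNum_joinCopiesSubgraph]
        push_cast
        ring
    _ ≤ hallRatio (joinCopies G k) := div_subIndepNum_le_hallRatio _

end JoinCopies

theorem statement4_general {V : Type*} [Fintype V] (G : SimpleGraph V)
    (k : ℕ) :
    hallRatio (joinCopies G k) = k * hallRatio G := by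
  have hρ := hallRatio_nonneg G
  apply le_antisymm
  · refine Real.sSup_le ?_ (by positivity)
    rintro _ ⟨H, -, rfl⟩
    exact div_subIndepNum_le_mul_hallRatio H
  · rw [← smul_eq_mul, hallRatio.eq_1 G, ← Real.sSup_smul_of_nonneg (Nat.cast_nonneg k)]
    refine Real.sSup_le ?_ (hallRatio_nonneg _)
    rintro _ ⟨_, ⟨H, -, rfl⟩, rfl⟩
    exact mul_div_subIndepNum_le_hallRatio_joinCopies H

/-- `ρ(G_k) = k·ρ(G)` where `G_k` is the join of `k` disjoint copies of `G`. -/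
theorem statement4 {V : Type*} [Fintype V] [Nonempty V] (G : SimpleGraph V)
    (k : ℕ) (hk : 1 ≤ k) :
    hallRatio (joinCopies G k) = k * hallRatio G :=
  statement4_general G k

end Paper
end

section
/- Let a ≥ 2 and q ≥ 1 be integers, and let H be a bipartite graph with bipartition (A, B) where every vertex of A has degree exactly a and |A| = q·|B|, with B nonempty. Then there exists a graph F on vertex set B, all of whose edges join pairs of vertices having a common neighbor in A (with distinct vertices of A accounting for distinct edges), such that every independent set Z of F satisfies deg_H(Z) < (√q·a + q)·|B|. -/
/-!
Pick for every `v ∈ A` an ordered pair of distinct neighbours of `v`. Out of the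
`(a(a-1))^|A|` such choices, those in which a fixed `Z ⊆ B` contains no chosen pair number
`∏ᵥ (a(a-1) - dᵥ(dᵥ-1))` with `dᵥ = |N(v) ∩ Z|`. Double counting gives `deg_H(Z) = ∑ᵥ dᵥ`, so if
`Z` is heavy, i.e. `deg_H(Z) ≥ (√q·a + q)|B|`, Cauchy–Schwarz yields `∑ᵥ dᵥ(dᵥ-1) ≥ a²|B|`, and
`1 - x ≤ e^{-x}` bounds the proportion of these choices by `e^{-|B|} < 2^{-|B|}`. A union bound over
the at most `2^|B|` heavy sets leaves a choice in which every heavy set contains a chosen pair.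
-/

open scoped BigOperators

namespace Paper

variable {V : Type*}

open Finset

theorem _root_.Finset.exists_mem_forall_not_mem_of_card_mul_lt {α ι : Type*} [DecidableEq α]
    {Ω : Finset α} {s : Finset ι} {t : ι → Finset α} {K : ℕ} (hΩ : Ω.Nonempty)
    (hs : #s ≤ K) (ht : ∀ i ∈ s, #(t i) * K < #Ω) : ∃ x ∈ Ω, ∀ i ∈ s, x ∉ t i := by
  by_contra! hcover
  have hΩ_le : #Ω ≤ ∑ i ∈ s, #(t i) :=
    (card_le_card fun x hx => mem_biUnion.2 (hcover x hx)).trans card_biUnion_le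
  obtain rfl | hs_ne := s.eq_empty_or_nonempty
  · simp_all
  have : (∑ i ∈ s, #(t i)) * K < #Ω * K :=
    calc (∑ i ∈ s, #(t i)) * K = ∑ i ∈ s, #(t i) * K := sum_mul ..
      _ < ∑ _ ∈ s, #Ω := sum_lt_sum_of_nonempty hs_ne ht
      _ = #s * #Ω := by rw [sum_const, smul_eq_mul]
      _ ≤ #Ω * K := by rw [mul_comm]; exact Nat.mul_le_mul_left _ hs
  exact absurd (Nat.lt_of_mul_lt_mul_right this) hΩ_le.not_gt

theorem _root_.Finset.cast_card_offDiag {α R : Type*} [DecidableEq α] [CommRing R] (s : Finset α) :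
    (#s.offDiag : R) = #s * (#s - 1) := by
  rw [offDiag_card, Nat.cast_sub (Nat.le_mul_self _)]
  push_cast
  ring

theorem _root_.Finset.cast_card_offDiag_filter_not_both_mem {α R : Type*} [DecidableEq α]
    [CommRing R] (s t : Finset α) :
    (#{p ∈ s.offDiag | ¬(p.1 ∈ t ∧ p.2 ∈ t)} : R) = #s * (#s - 1) - #(s ∩ t) * (#(s ∩ t) - 1) := by
  have hboth : {p ∈ s.offDiag | p.1 ∈ t ∧ p.2 ∈ t} = (s ∩ t).offDiag := by
    ext p
    simp only [mem_filter, mem_offDiag, mem_inter]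
    tauto
  rw [← cast_card_offDiag, ← cast_card_offDiag, ← hboth,
    ← card_filter_add_card_filter_not (s := s.offDiag) (fun p => p.1 ∈ t ∧ p.2 ∈ t)]
  push_cast
  ring

theorem _root_.Real.prod_sub_le_pow_mul_exp {ι : Type*} (s : Finset ι) {c : ℝ} {x : ι → ℝ}
    (hc : 0 < c) (hx : ∀ i ∈ s, x i ≤ c) :
    ∏ i ∈ s, (c - x i) ≤ c ^ #s * Real.exp (-(∑ i ∈ s, x i) / c) := by
  calc ∏ i ∈ s, (c - x i) = ∏ i ∈ s, c * (1 - x i / c) := by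
        refine prod_congr rfl fun i _ => ?_
        field_simp
    _ ≤ ∏ i ∈ s, c * Real.exp (-(x i / c)) := by
        refine prod_le_prod (fun i hi => ?_) fun i _ => ?_
        · exact mul_nonneg hc.le (sub_nonneg.2 ((div_le_one hc).2 (hx i hi)))
        · gcongr
          exact Real.one_sub_le_exp_neg _
    _ = c ^ #s * Real.exp (-(∑ i ∈ s, x i) / c) := by
        rw [prod_mul_distrib, prod_const, ← Real.exp_sum, sum_neg_distrib, neg_div, sum_div]

theorem _root_.Real.two_pow_lt_exp {m : ℕ} (hm : m ≠ 0) : (2 : ℝ) ^ m < Real.exp m := by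
  rw [← Real.exp_one_pow]
  exact pow_lt_pow_left₀ (by linarith [Real.exp_one_gt_d9]) zero_le_two hm

theorem sq_mul_le_sum_mul_sub_one {ι : Type*} [Fintype ι] {q m : ℕ} {a : ℝ} (hq : 0 < q)
    (hm : 0 < m) (ha : 0 ≤ a) (hι : Fintype.card ι = q * m) (d : ι → ℝ)
    (hd : (√q * a + q) * m ≤ ∑ i, d i) : a ^ 2 * m ≤ ∑ i, d i * (d i - 1) := by
  -- Cauchy–Schwarz: `qm ∑ dᵢ(dᵢ - 1) ≥ D(D - qm) ≥ (√q a m)²` for `D = ∑ dᵢ`.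
  set D := ∑ i, d i
  have hn : (0 : ℝ) < q * m := by positivity
  have hcs : D ^ 2 ≤ q * m * ∑ i, d i ^ 2 := by
    simpa [hι] using sq_sum_le_card_mul_sum_sq (s := univ) (f := d)
  have hsum : ∑ i, d i * (d i - 1) = ∑ i, d i ^ 2 - D := by
    rw [← sum_sub_distrib]
    exact sum_congr rfl fun i _ => by ring
  have hsq : √q ^ 2 = q := Real.sq_sqrt q.cast_nonneg
  have hgap : √q * a * m ≤ D - q * m := by linarith
  have hprod : q * m * (a ^ 2 * m) ≤ D * (D - q * m) := by
    have hgap_nonneg : 0 ≤ √q * a * m := by positivity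
    calc q * m * (a ^ 2 * m) = (√q * a * m) * (√q * a * m) := by
          linear_combination (-(a ^ 2 * m ^ 2)) * hsq
        _ ≤ D * (D - q * m) := mul_le_mul (by linarith) hgap hgap_nonneg (by linarith)
  refine le_of_mul_le_mul_left ?_ hn
  rw [hsum]
  nlinarith

theorem prod_sub_mul_two_pow_lt {ι : Type*} [Fintype ι] {q m : ℕ} {a : ℝ} (hq : 0 < q)
    (hm : 0 < m) (ha : 1 < a) (hι : Fintype.card ι = q * m) (d : ι → ℝ)
    (hd_le : ∀ i, d i * (d i - 1) ≤ a * (a - 1)) (hd : (√q * a + q) * m ≤ ∑ i, d i) :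
    (∏ i, (a * (a - 1) - d i * (d i - 1))) * 2 ^ m < (a * (a - 1)) ^ (q * m) := by
  have hc : 0 < a * (a - 1) := mul_pos (by linarith) (by linarith)
  have hsum : m ≤ (∑ i, d i * (d i - 1)) / (a * (a - 1)) := by
    rw [le_div_iff₀ hc]
    nlinarith [sq_mul_le_sum_mul_sub_one hq hm (by linarith) hι d hd]
  calc (∏ i, (a * (a - 1) - d i * (d i - 1))) * 2 ^ m
      ≤ (a * (a - 1)) ^ (q * m) * Real.exp (-(∑ i, d i * (d i - 1)) / (a * (a - 1))) * 2 ^ m := by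
        gcongr
        simpa [hι] using Real.prod_sub_le_pow_mul_exp univ hc fun i _ => hd_le i
    _ ≤ (a * (a - 1)) ^ (q * m) * (Real.exp (-m) * 2 ^ m) := by
        rw [mul_assoc]
        gcongr
        rw [neg_div]
        exact neg_le_neg hsum
    _ < (a * (a - 1)) ^ (q * m) := by
        refine mul_lt_of_lt_one_right (by positivity) ?_
        rw [Real.exp_neg, inv_mul_lt_iff₀ (Real.exp_pos _), mul_one]
        exact Real.two_pow_lt_exp hm.ne'

open SimpleGraph

section PairChoices

variable [Fintype V] (H : SimpleGraph V) [DecidableRel H.Adj]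

theorem ncard_neighborSet_eq_card_neighborFinset (v : V) :
    (H.neighborSet v).ncard = #(H.neighborFinset v) := by
  rw [neighborFinset_def, Set.ncard_eq_toFinset_card']

variable [DecidableEq V]

theorem sum_card_neighborFinset_eq_sum_card_inter {A Z : Finset V}
    (hZ : ∀ z ∈ Z, H.neighborFinset z ⊆ A) :
    ∑ z ∈ Z, #(H.neighborFinset z) = ∑ v ∈ A, #(H.neighborFinset v ∩ Z) := by
  refine (sum_congr rfl fun z hz => congrArg card ?_).trans
    ((sum_card_bipartiteAbove_eq_sum_card_bipartiteBelow H.Adj).trans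
      (sum_congr rfl fun v _ => congrArg card ?_))
  · ext u
    simp only [mem_bipartiteAbove, mem_neighborFinset]
    exact ⟨fun h => ⟨hZ z hz (by simpa using h), h⟩, And.right⟩
  · ext u
    simp only [mem_bipartiteBelow, mem_inter, mem_neighborFinset, H.adj_comm u]
    tauto

-- Ordered pairs of distinct neighbours; a choice `g` yields the edges `s(g v)` of the graph `F`.
def pairChoices (A : Finset V) : Finset (A → V × V) :=
  Fintype.piFinset fun v => (H.neighborFinset v).offDiag

def pairChoicesAvoiding (A Z : Finset V) : Finset (A → V × V) :=
  Fintype.piFinset fun v => {p ∈ (H.neighborFinset v).offDiag | ¬(p.1 ∈ Z ∧ p.2 ∈ Z)}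

variable {H}

theorem mem_pairChoicesAvoiding {A Z : Finset V} {g : A → V × V} :
    g ∈ pairChoicesAvoiding H A Z ↔ g ∈ pairChoices H A ∧ ∀ v, ¬((g v).1 ∈ Z ∧ (g v).2 ∈ Z) := by
  simp only [pairChoicesAvoiding, pairChoices, Fintype.mem_piFinset, mem_filter, forall_and]

variable {a : ℕ} {A : Finset V}

theorem cast_card_pairChoices (hdeg : ∀ v ∈ A, #(H.neighborFinset v) = a) :
    (#(pairChoices H A) : ℝ) = (a * (a - 1)) ^ #A := by
  simp only [pairChoices, Fintype.card_piFinset, Nat.cast_prod, cast_card_offDiag]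
  rw [prod_congr rfl fun v _ => by rw [hdeg v v.2], prod_const, card_univ,
    Fintype.card_coe]

theorem cast_card_pairChoicesAvoiding (hdeg : ∀ v ∈ A, #(H.neighborFinset v) = a)
    (Z : Finset V) :
    (#(pairChoicesAvoiding H A Z) : ℝ) =
      ∏ v : A,
        ((a : ℝ) * (a - 1) - #(H.neighborFinset v ∩ Z) * (#(H.neighborFinset v ∩ Z) - 1)) := by
  simp only [pairChoicesAvoiding, Fintype.card_piFinset, Nat.cast_prod,
    cast_card_offDiag_filter_not_both_mem]
  exact prod_congr rfl fun v _ => by rw [hdeg v v.2]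

theorem card_pairChoicesAvoiding_mul_lt (hdeg : ∀ v ∈ A, #(H.neighborFinset v) = a)
    {q m : ℕ} (ha : 2 ≤ a) (hq : 0 < q) (hm : 0 < m)
    (hA : #A = q * m) {Z : Finset V} (hZ : ∀ z ∈ Z, H.neighborFinset z ⊆ A)
    (hheavy : (√q * a + q) * m ≤ ∑ z ∈ Z, (#(H.neighborFinset z) : ℝ)) :
    (#(pairChoicesAvoiding H A Z) : ℝ) * 2 ^ m < #(pairChoices H A) := by
  set d : A → ℝ := fun v => #(H.neighborFinset v ∩ Z)
  have hd_le : ∀ v : A, d v * (d v - 1) ≤ a * (a - 1) := by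
    intro v
    have hle : d v ≤ a := by
      simp only [d, ← hdeg v v.2]
      exact_mod_cast card_le_card inter_subset_left
    have : (2 : ℝ) ≤ a := by exact_mod_cast ha
    nlinarith [mul_nonneg (sub_nonneg.2 hle) (by positivity : (0 : ℝ) ≤ d v)]
  have hd : (√q * a + q) * m ≤ ∑ v, d v :=
    calc _ ≤ _ := hheavy
      _ = ((∑ v ∈ A, #(H.neighborFinset v ∩ Z) : ℕ) : ℝ) := by
        rw [← sum_card_neighborFinset_eq_sum_card_inter H hZ, Nat.cast_sum]
      _ = ∑ v, d v := by rw [Nat.cast_sum]; exact (sum_coe_sort A _).symm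
  rw [cast_card_pairChoices hdeg, cast_card_pairChoicesAvoiding hdeg, hA]
  exact prod_sub_mul_two_pow_lt hq hm (by exact_mod_cast ha) (by simp [hA]) d hd_le hd

end PairChoices

theorem statement10_general {V : Type*} [Fintype V] (H : SimpleGraph V) (a q : ℕ)
    (ha : 2 ≤ a) (hq : 1 ≤ q) (A B : Finset V)
    (hdisj : Disjoint A B)
    (hbip : ∀ u v, H.Adj u v → (u ∈ A ∧ v ∈ B) ∨ (u ∈ B ∧ v ∈ A))
    (hdegA : ∀ v ∈ A, (H.neighborSet v).ncard = a)
    (hcard : A.card = q * B.card) (hB : B.Nonempty) :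
    ∃ f : (v : A) → Sym2 V,
      (∀ v : A, ¬ (f v).IsDiag ∧ ∀ u ∈ f v, H.Adj (v : V) u) ∧
      ∀ Z : Finset V, Z ⊆ B → (∀ v : A, ¬ ∀ u ∈ f v, u ∈ Z) →
        ∑ v ∈ Z, ((H.neighborSet v).ncard : ℝ) < (Real.sqrt q * a + q) * B.card := by
  classical
  simp only [ncard_neighborSet_eq_card_neighborFinset] at hdegA ⊢
  have hnbr : ∀ z ∈ B, H.neighborFinset z ⊆ A := fun z hz u hu => by
    rcases hbip z u ((mem_neighborFinset ..).1 hu) with ⟨hzA, -⟩ | ⟨-, huA⟩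
    exacts [absurd hz (disjoint_left.1 hdisj hzA), huA]
  have hchoices : (pairChoices H A).Nonempty := by
    rw [← card_pos, ← Nat.cast_pos (α := ℝ), cast_card_pairChoices hdegA]
    have : (2 : ℝ) ≤ a := by exact_mod_cast ha
    exact pow_pos (by nlinarith) _
  obtain ⟨g, hg, hg_avoid⟩ := exists_mem_forall_not_mem_of_card_mul_lt (K := 2 ^ #B)
    (s := {Z ∈ B.powerset | (√q * a + q) * #B ≤ ∑ z ∈ Z, (#(H.neighborFinset z) : ℝ)})
    (t := pairChoicesAvoiding H A) hchoices ((card_filter_le _ _).trans_eq (card_powerset B))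
    fun Z hZ => by
      rw [mem_filter, mem_powerset] at hZ
      exact_mod_cast card_pairChoicesAvoiding_mul_lt hdegA ha hq hB.card_pos hcard
        (fun z hz => hnbr z (hZ.1 hz)) hZ.2
  refine ⟨fun v => s((g v).1, (g v).2), fun v => ?_, fun Z hZB hindep => ?_⟩
  · obtain ⟨h₁, h₂, hne⟩ := mem_offDiag.1 (Fintype.mem_piFinset.1 hg v)
    simp only [mem_neighborFinset] at h₁ h₂
    exact ⟨Sym2.mk_isDiag_iff.not.2 hne, Sym2.forall_mem_pair.2 ⟨h₁, h₂⟩⟩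
  · by_contra! hheavy
    exact hg_avoid Z (mem_filter.2 ⟨mem_powerset.2 hZB, hheavy⟩)
      (mem_pairChoicesAvoiding.2 ⟨hg, fun v hv => hindep v (Sym2.forall_mem_pair.2 hv)⟩)

/-- with `H` bipartite with parts `(A,B)`, each vertex of `A` of degree
exactly `a` and `|A| = q|B|`, `B` nonempty, there is a choice, for each `v ∈ A`, of a
pair of distinct neighbors of `v` (an edge of a graph `F` on `B`) such that every set
`Z ⊆ B` independent with respect to these edges satisfies `deg_H(Z) < (√q·a + q)|B|`. -/
theorem statement10 {V : Type*} [Fintype V] (H : SimpleGraph V) (a q : ℕ)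
    (ha : 2 ≤ a) (hq : 1 ≤ q) (A B : Finset V)
    (hpart : (↑A ∪ ↑B : Set V) = Set.univ) (hdisj : Disjoint A B)
    (hbip : ∀ u v, H.Adj u v → (u ∈ A ∧ v ∈ B) ∨ (u ∈ B ∧ v ∈ A))
    (hdegA : ∀ v ∈ A, (H.neighborSet v).ncard = a)
    (hcard : A.card = q * B.card) (hB : B.Nonempty) :
    ∃ f : (v : A) → Sym2 V,
      (∀ v : A, ¬ (f v).IsDiag ∧ ∀ u ∈ f v, H.Adj (v : V) u) ∧
      ∀ Z : Finset V, Z ⊆ B → (∀ v : A, ¬ ∀ u ∈ f v, u ∈ Z) →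
        ∑ v ∈ Z, ((H.neighborSet v).ncard : ℝ) < (Real.sqrt q * a + q) * B.card :=
  statement10_general H a q ha hq A B hdisj hbip hdegA hcard hB

end Paper
end

section
/- Every finite graph G with at least one vertex has average degree at least |V(G)|/α(G) − 1, where α(G) is the independence number. -/
/-!
An independent set of `G` is a clique of `Gᶜ`, so `Gᶜ` is `K_{α+1}`-free and Turán's theorem
gives `e(Gᶜ) ≤ (1 - 1/α) n²/2`. Since `e(G) + e(Gᶜ) = n(n-1)/2`, this rearranges to
`n² ≤ α (n + 2 e(G))`, which is the claim `2 e(G)/n ≥ n/α - 1`.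
-/

open scoped BigOperators

open Finset

namespace SimpleGraph

variable {V : Type*} [Fintype V] {G : SimpleGraph V} [DecidableRel G.Adj]

theorem CliqueFree.two_mul_mul_card_edgeFinset_le {r : ℕ} (hG : G.CliqueFree (r + 1)) :
    2 * r * #G.edgeFinset ≤ (r - 1) * Fintype.card V ^ 2 := by
  rcases r.eq_zero_or_pos with rfl | hr
  · simp
  obtain ⟨H, _, hH⟩ := exists_isTuranMaximal (V := V) hr
  obtain ⟨e⟩ := (isTuranMaximal_iff_nonempty_iso_turanGraph hr).1 hH
  calc 2 * r * #G.edgeFinset ≤ 2 * r * #H.edgeFinset := Nat.mul_le_mul_left _ (hH.2 hG)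
    _ = 2 * r * #(turanGraph (Fintype.card V) r).edgeFinset := by rw [e.card_edgeFinset_eq]
    _ ≤ _ := mul_card_edgeFinset_turanGraph_le

theorem card_edgeFinset_add_card_edgeFinset_compl [DecidableEq V] :
    #G.edgeFinset + #Gᶜ.edgeFinset = (Fintype.card V).choose 2 := by
  rw [← card_union_of_disjoint (disjoint_edgeFinset.2 disjoint_compl_right), ← edgeFinset_sup,
    ← card_edgeFinset_top_eq_card_choose_two]
  congr!
  exact sup_compl_eq_top

theorem card_sq_le_mul_of_cliqueFree_compl {r : ℕ} (hG : Gᶜ.CliqueFree (r + 1)) :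
    Fintype.card V ^ 2 ≤ r * (Fintype.card V + 2 * #G.edgeFinset) := by
  classical
  rcases r with _ | r
  · rw [zero_add, cliqueFree_one, ← Fintype.card_eq_zero_iff] at hG
    simp [hG]
  have hTuran := hG.two_mul_mul_card_edgeFinset_le
  have hTotal := card_edgeFinset_add_card_edgeFinset_compl (G := G)
  rify at hTuran hTotal ⊢
  rw [Nat.cast_choose_two] at hTotal
  push_cast at hTuran ⊢
  linear_combination hTuran - 2 * ((r : ℝ) + 1) * hTotal

end SimpleGraph

namespace Paper

open SimpleGraph

variable {V : Type*}

theorem isIndepSet_iff_isIndepSet (G : SimpleGraph V) (s : Set V) :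
    IsIndepSet G s ↔ G.IsIndepSet s :=
  ⟨fun h _ hu _ hv _ => h hu hv, fun h _ hu _ hv huv => h hu hv (G.ne_of_adj huv) huv⟩

variable [Fintype V]

theorem card_le_indepNum (G : SimpleGraph V) {s : Finset V} (hs : IsIndepSet G s) :
    #s ≤ indepNum G := by
  refine le_csSup ⟨Fintype.card V, ?_⟩ ⟨s, hs, rfl⟩
  rintro n ⟨t, -, rfl⟩
  exact t.card_le_univ

theorem cliqueFree_compl_indepNum_add_one (G : SimpleGraph V) :
    Gᶜ.CliqueFree (indepNum G + 1) := by
  intro s hs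
  have hind : IsIndepSet G s :=
    (isIndepSet_iff_isIndepSet G s).2 ((isClique_compl G).1 hs.isClique)
  have hcard := card_le_indepNum G hind
  rw [hs.card_eq] at hcard
  omega

theorem statement15_general {V : Type*} [Fintype V] (G : SimpleGraph V) :
    (Fintype.card V : ℝ) / (indepNum G : ℝ) - 1 ≤ avgDeg G := by
  classical
  have hsq := card_sq_le_mul_of_cliqueFree_compl (cliqueFree_compl_indepNum_add_one G)
  have hm : G.edgeSet.ncard = #G.edgeFinset := Set.ncard_eq_toFinset_card' _
  have havg : 0 ≤ avgDeg G := by unfold avgDeg; positivity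
  rcases Nat.eq_zero_or_pos (indepNum G) with hα | hα
  · rw [hα, Nat.cast_zero, div_zero]
    linarith
  rcases Nat.eq_zero_or_pos (Fintype.card V) with hn | hn
  · simp [avgDeg, hn]
  rw [avgDeg, hm, div_sub_one (by positivity), div_le_div_iff₀ (by positivity) (by positivity)]
  rify at hsq
  linarith

/-- every finite graph with at least one vertex has average degree at
least `|V(G)|/α(G) − 1`. -/
theorem statement15 {V : Type*} [Fintype V] (G : SimpleGraph V)
    (hn : 1 ≤ Fintype.card V) :
    (Fintype.card V : ℝ) / (indepNum G : ℝ) - 1 ≤ avgDeg G :=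
  statement15_general G

end Paper
end

section
/- Let X be a sum of n independent Bernoulli random variables each with mean p, and let μ = np. Then for every δ ≥ 0, Prob[X ≥ (1+δ)μ] ≤ exp(−δ²μ/(2+δ)). -/
open scoped BigOperators

namespace Paper

variable {V : Type*}

/-!
Chernoff's method: Markov's inequality applied to `exp (t * X)` bounds the tail by
`exp (-t (1 + δ) μ) * E[exp (t * X)]`. By independence the moment generating function factors as
`(1 - p + p e^t)^n ≤ exp (μ (e^t - 1))`. The choice `t = log (1 + δ)` gives
`exp (-μ ((1 + δ) log (1 + δ) - δ))`, and `log (1 + δ) ≥ 2δ / (2 + δ)` turns this into the bound.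
-/

open MeasureTheory ProbabilityTheory Real
open scoped NNReal

lemma mgf_sum_pi {ι : Type*} [Fintype ι] {Ω : ι → Type*} [∀ i, MeasurableSpace (Ω i)]
    (ν : ∀ i, Measure (Ω i)) [∀ i, IsProbabilityMeasure (ν i)] {f : ∀ i, Ω i → ℝ}
    (hf : ∀ i, Measurable (f i)) (t : ℝ) :
    mgf (fun ω => ∑ i, f i (ω i)) (Measure.pi ν) t = ∏ i, mgf (f i) (ν i) t := by
  have h_indep := iIndepFun_pi (μ := ν) fun i => (hf i).aemeasurable
  have h_sum : (fun ω : ∀ i, Ω i => ∑ i, f i (ω i)) = ∑ i, fun ω => f i (ω i) :=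
    (Finset.sum_fn _ _).symm
  rw [h_sum, h_indep.mgf_sum (fun i => (hf i).comp (measurable_pi_apply i))]
  refine Finset.prod_congr rfl fun i _ => ?_
  rw [← (measurePreserving_eval ν i).map_eq, mgf_map (measurable_pi_apply i).aemeasurable
    ((hf i).const_mul t).exp.aestronglyMeasurable]
  rfl

lemma mgf_bernoulli (p : ℝ≥0) (hp : p ≤ 1) (t : ℝ) :
    mgf (fun b : Bool => if b then (1 : ℝ) else 0) (PMF.bernoulli p hp).toMeasure t
      = 1 - p + p * exp t := by
  simp [mgf, PMF.integral_eq_sum, PMF.bernoulli_apply, NNReal.coe_sub hp, add_comm]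

lemma chernoff_upper_tail_of_mgf_le {Ω : Type*} [MeasurableSpace Ω] {μ : Measure Ω} [IsFiniteMeasure μ]
    {X : Ω → ℝ} {m δ : ℝ} (hm : 0 ≤ m) (hδ : 0 ≤ δ)
    (h_int : ∀ t, Integrable (fun ω => exp (t * X ω)) μ)
    (h_mgf : ∀ t, 0 ≤ t → mgf X μ t ≤ exp (m * (exp t - 1))) :
    μ.real {ω | (1 + δ) * m ≤ X ω} ≤ exp (-(δ ^ 2 * m) / (2 + δ)) := by
  set t := log (1 + δ)
  have ht : 0 ≤ t := log_nonneg (by linarith)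
  have h_exp_t : exp t = 1 + δ := exp_log (by linarith)
  have h_log : 2 * δ / (δ + 2) ≤ t := le_log_one_add_of_nonneg hδ
  calc μ.real {ω | (1 + δ) * m ≤ X ω}
      ≤ exp (-t * ((1 + δ) * m)) * mgf X μ t := measure_ge_le_exp_mul_mgf _ ht (h_int t)
    _ ≤ exp (-t * ((1 + δ) * m)) * exp (m * δ) := by
        gcongr
        simpa [h_exp_t] using h_mgf t ht
    _ = exp (-(m * ((1 + δ) * t - δ))) := by rw [← exp_add]; ring_nf
    _ ≤ exp (-(δ ^ 2 * m) / (2 + δ)) := by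
        gcongr
        rw [div_le_iff₀ (by linarith)] at h_log
        rw [neg_div, neg_le_neg_iff, div_le_iff₀ (by linarith)]
        nlinarith [mul_le_mul_of_nonneg_left h_log (mul_nonneg hm (by linarith : 0 ≤ 1 + δ))]

lemma mgf_sum_bernoulli_pi_le (n : ℕ) (p : ℝ≥0) (hp : p ≤ 1) (t : ℝ) :
    mgf (fun ω : Fin n → Bool => ∑ i, if ω i then (1 : ℝ) else 0)
        (Measure.pi fun _ => (PMF.bernoulli p hp).toMeasure) t
      ≤ exp (n * p * (exp t - 1)) := by
  refine (mgf_sum_pi (f := fun _ (b : Bool) => if b then (1 : ℝ) else 0) _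
    (fun _ => measurable_of_finite _) t).trans_le ?_
  rw [Finset.prod_const, mgf_bernoulli, Finset.card_fin, mul_assoc, exp_nat_mul]
  gcongr
  · exact add_nonneg (sub_nonneg.2 (by exact_mod_cast hp)) (by positivity)
  · linarith [add_one_le_exp (p * (exp t - 1))]

/-- Chernoff upper tail: if `X` is the sum of `n` independent
Bernoulli variables with mean `p` (modelled on the product of `n` Bernoulli
measures on `Bool`), `μ = np`, then for every `δ ≥ 0`,
`Prob[X ≥ (1+δ)μ] ≤ exp(−δ²μ/(2+δ))`. -/
theorem statement16 (n : ℕ) (p : ℝ) (hp0 : 0 ≤ p) (hp1 : p ≤ 1) (δ : ℝ) (hδ : 0 ≤ δ) :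
    (MeasureTheory.Measure.pi fun _ : Fin n =>
        (PMF.bernoulli (Real.toNNReal p) (Real.toNNReal_le_one.mpr hp1)).toMeasure)
      {ω : Fin n → Bool | (1 + δ) * (n * p) ≤ ∑ i, (if ω i then (1 : ℝ) else 0)}
      ≤ ENNReal.ofReal (Real.exp (-(δ ^ 2 * (n * p)) / (2 + δ))) := by
  rw [← ofReal_measureReal]
  gcongr
  refine chernoff_upper_tail_of_mgf_le (by positivity) hδ (fun _ => .of_finite) fun t _ => ?_
  simpa [Real.coe_toNNReal p hp0, mul_assoc] using
    mgf_sum_bernoulli_pi_le n p.toNNReal (Real.toNNReal_le_one.mpr hp1) t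

end Paper
end

section
/- Let X be a sum of n independent Bernoulli random variables each with mean p, and let μ = np. Then for every δ with 0 ≤ δ ≤ 1, Prob[X ≤ (1−δ)μ] ≤ exp(−δ²μ/2). -/
set_option linter.deprecated false

/-!
Exponential Markov inequality at `t = -δ`: `P[X ≤ a] ≤ e^{δa} E[e^{-δX}]`, and by independence
`E[e^{-δX}] = (1 + p(e^{-δ} - 1))ⁿ ≤ exp (np(e^{-δ} - 1))`. Since `e^{-δ} ≤ 1 - δ + δ²/2`, the
exponent `δ(1 - δ)np + np(e^{-δ} - 1)` at `a = (1 - δ)np` is at most `-δ²np/2`. Unlike the optimal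
choice `t = log (1 - δ)`, this `t` needs no special treatment at `δ = 1`.
-/

open scoped BigOperators

namespace Paper

variable {V : Type*}

section Chernoff

open MeasureTheory ProbabilityTheory Real NNReal

variable {ι : Type*} [Fintype ι]

theorem exp_neg_le_one_sub_add_sq_div_two {x : ℝ} (hx : 0 ≤ x) :
    exp (-x) ≤ 1 - x + x ^ 2 / 2 := by
  -- `e⁻ˣ ≤ 1 / (1 + x + x²/2)`, and `(1 - x + x²/2) (1 + x + x²/2) = 1 + x⁴/4 ≥ 1`.
  have hquad := quadratic_le_exp_of_nonneg hx
  have : exp (-x) * exp x = 1 := by rw [← exp_add, neg_add_cancel, exp_zero]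
  nlinarith [exp_pos (-x), sq_nonneg x, mul_le_mul_of_nonneg_left hquad (exp_pos (-x)).le]

theorem one_add_pow_le_exp_mul {x : ℝ} (hx : -1 ≤ x) (n : ℕ) : (1 + x) ^ n ≤ exp (n * x) := by
  rw [exp_nat_mul]
  exact pow_le_pow_left₀ (by linarith) (by linarith [add_one_le_exp x]) n

theorem integral_bernoulli_toMeasure (q : ℝ≥0) (hq : q ≤ 1) (f : Bool → ℝ) :
    ∫ b, f b ∂(PMF.bernoulli q hq).toMeasure = q * f true + (1 - q) * f false := by
  rw [PMF.integral_eq_sum]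
  simp [PMF.bernoulli_apply, NNReal.coe_sub hq]

theorem mgf_bernoulli_count (q : ℝ≥0) (hq : q ≤ 1) (t : ℝ) :
    mgf (fun ω : ι → Bool => ∑ i, if ω i then (1 : ℝ) else 0)
      (Measure.pi fun _ => (PMF.bernoulli q hq).toMeasure) t
      = (1 + q * (exp t - 1)) ^ Fintype.card ι := by
  have hprod (ω : ι → Bool) : exp (t * ∑ i, if ω i then (1 : ℝ) else 0)
      = ∏ i, exp (t * if ω i then 1 else 0) := by
    rw [Finset.mul_sum, exp_sum]
  simp_rw [mgf, hprod]
  rw [integral_fintype_prod_eq_pow fun b : Bool => exp (t * if b then 1 else 0),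
    integral_bernoulli_toMeasure]
  simp only [if_true, if_false, Bool.false_eq_true, mul_one, mul_zero, exp_zero]
  ring

theorem measureReal_bernoulli_count_le (q : ℝ≥0) (hq : q ≤ 1) {t : ℝ} (ht : t ≤ 0) (a : ℝ) :
    (Measure.pi fun _ : ι => (PMF.bernoulli q hq).toMeasure).real
      {ω | ∑ i, (if ω i then (1 : ℝ) else 0) ≤ a}
      ≤ exp (-t * a + Fintype.card ι * q * (exp t - 1)) := by
  calc _ ≤ exp (-t * a) * mgf (fun ω : ι → Bool => ∑ i, if ω i then (1 : ℝ) else 0)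
          (Measure.pi fun _ => (PMF.bernoulli q hq).toMeasure) t :=
        measure_le_le_exp_mul_mgf a ht .of_finite
    _ ≤ exp (-t * a) * exp (Fintype.card ι * (q * (exp t - 1))) := by
        rw [mgf_bernoulli_count]
        gcongr
        refine one_add_pow_le_exp_mul ?_ _
        have hq' : (q : ℝ) ≤ 1 := hq
        nlinarith [exp_pos t, q.2, exp_le_one_iff.2 ht]
    _ = _ := by rw [← exp_add]; ring_nf
end Chernoff

theorem statement17_general (n : ℕ) (p : ℝ) (hp0 : 0 ≤ p) (hp1 : p ≤ 1) (δ : ℝ)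
    (hδ0 : 0 ≤ δ) :
    (MeasureTheory.Measure.pi fun _ : Fin n =>
        (PMF.bernoulli (Real.toNNReal p) (Real.toNNReal_le_one.mpr hp1)).toMeasure)
      {ω : Fin n → Bool | ∑ i, (if ω i then (1 : ℝ) else 0) ≤ (1 - δ) * (n * p)}
      ≤ ENNReal.ofReal (Real.exp (-(δ ^ 2 * (n * p)) / 2)) := by
  have hchernoff := measureReal_bernoulli_count_le (ι := Fin n) _ (Real.toNNReal_le_one.mpr hp1)
    (neg_nonpos.2 hδ0) ((1 - δ) * (n * p))
  rw [Fintype.card_fin, Real.coe_toNNReal p hp0, neg_neg] at hchernoff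
  have hexponent :
      δ * ((1 - δ) * (n * p)) + n * p * (Real.exp (-δ) - 1) ≤ -(δ ^ 2 * (n * p)) / 2 := by
    have hnp : 0 ≤ (n : ℝ) * p := by positivity
    nlinarith [mul_le_mul_of_nonneg_left (exp_neg_le_one_sub_add_sq_div_two hδ0) hnp]
  rw [← MeasureTheory.ofReal_measureReal (MeasureTheory.measure_ne_top _ _)]
  exact ENNReal.ofReal_le_ofReal (hchernoff.trans (Real.exp_le_exp.2 hexponent))

/-- Chernoff lower tail: if `X` is the sum of `n` independent
Bernoulli variables with mean `p` (modelled on the product of `n` Bernoulli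
measures on `Bool`), `μ = np`, then for every `0 ≤ δ ≤ 1`,
`Prob[X ≤ (1−δ)μ] ≤ exp(−δ²μ/2)`. -/
theorem statement17 (n : ℕ) (p : ℝ) (hp0 : 0 ≤ p) (hp1 : p ≤ 1) (δ : ℝ)
    (hδ0 : 0 ≤ δ) (hδ1 : δ ≤ 1) :
    (MeasureTheory.Measure.pi fun _ : Fin n =>
        (PMF.bernoulli (Real.toNNReal p) (Real.toNNReal_le_one.mpr hp1)).toMeasure)
      {ω : Fin n → Bool | ∑ i, (if ω i then (1 : ℝ) else 0) ≤ (1 - δ) * (n * p)}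
      ≤ ENNReal.ofReal (Real.exp (-(δ ^ 2 * (n * p)) / 2)) :=
  statement17_general n p hp0 hp1 δ hδ0

end Paper
end

section
/- There exists a class C of finite graphs that is nowhere dense but has unbounded Hall ratio; specifically, any sequence of graphs (G_n) with girth(G_n) → ∞, maximum degree of G_n bounded by a fixed non-decreasing function of girth(G_n), and |V(G_n)|/α(G_n) → ∞ yields such a class. -/
open scoped BigOperators

namespace Paper

variable {V : Type*}

/-- `G'` is a shallow minor of `G` at depth `r`: it is obtained by deleting vertices
and edges and contracting pairwise disjoint branch sets, each of radius at most `r`. -/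
def IsShallowMinor {V W : Type*} (r : ℕ) (G : SimpleGraph V) (G' : SimpleGraph W) : Prop :=
  ∃ S : W → Set V,
    (∀ w, (S w).Nonempty) ∧
    Pairwise (Function.onFun Disjoint S) ∧
    (∀ w, ∃ c ∈ S w, ∀ x ∈ S w, ∃ p : G.Walk c x,
      p.length ≤ r ∧ ∀ z ∈ p.support, z ∈ S w) ∧
    (∀ u w, G'.Adj u w → ∃ x ∈ S u, ∃ y ∈ S w, G.Adj x y)

end Paper

/-!
If the girth of `G` exceeds `6r + 3`, a triangle in a depth-`r` shallow minor lifts, through its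
three branch sets, to a closed walk of length at most `6r + 3` that uses an edge between two
branch sets only once, hence to a cycle that is too short. Otherwise the girth is at most
`6r + 3`, so every degree is below `F (6r + 4)`; picking for each vertex of a clique a vertex of
its branch set adjacent to (or inside) one fixed branch set injects the clique into a ball of
radius `r + 1`, which has at most `F (6r + 4) ^ (r + 1)` vertices. The Hall ratio is at least
`|V| / α`, witnessed by the whole graph.
-/

open Finset

namespace SimpleGraph

variable {V : Type*} {G : SimpleGraph V}

lemma IsClique.card_lt_of_cliqueFree {n : ℕ} {s : Finset V} (hG : G.CliqueFree n)
    (hs : G.IsClique ↑s) : s.card < n := by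
  by_contra! h
  obtain ⟨t, hts, ht⟩ := exists_subset_card_eq h
  exact hG t ⟨hs.subset (by simpa using hts), ht⟩

lemma girth_le_length_add_one {a b : V} (hab : G.Adj a b) (q : G.Walk b a)
    (hq : s(a, b) ∉ q.edges) : G.girth ≤ q.length + 1 := by
  classical
  have hcycle : (Walk.cons hab q.bypass).IsCycle :=
    Walk.cons_isCycle_iff _ _ |>.mpr
      ⟨q.bypass_isPath, fun h ↦ hq (q.edges_bypass_subset_edges h)⟩
  have := girth_le_length hcycle
  have := q.length_bypass_le_length
  simp only [Walk.length_cons] at *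
  omega

lemma Walk.support_cons_subset_union {S T : Set V} {x y z : V} (h : G.Adj x y)
    {q : G.Walk y z} (hx : x ∈ S) (hq : ∀ v ∈ q.support, v ∈ T) :
    ∀ v ∈ (Walk.cons h q).support, v ∈ S ∪ T := by
  simp only [Walk.support_cons, List.mem_cons]
  rintro v (rfl | hv)
  exacts [.inl hx, .inr (hq v hv)]

def HasRadiusLE (G : SimpleGraph V) (T : Set V) (r : ℕ) : Prop :=
  ∃ c ∈ T, ∀ x ∈ T, ∃ p : G.Walk c x, p.length ≤ r ∧ ∀ z ∈ p.support, z ∈ T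

lemma HasRadiusLE.exists_walk {T : Set V} {r : ℕ} (hT : G.HasRadiusLE T r) {x y : V}
    (hx : x ∈ T) (hy : y ∈ T) :
    ∃ p : G.Walk x y, p.length ≤ 2 * r ∧ ∀ z ∈ p.support, z ∈ T := by
  obtain ⟨c, -, hc⟩ := hT
  obtain ⟨p, hpr, hpT⟩ := hc x hx
  obtain ⟨q, hqr, hqT⟩ := hc y hy
  refine ⟨p.reverse.append q, by simp only [Walk.length_append, Walk.length_reverse]; omega, ?_⟩
  intro z hz
  rcases Walk.mem_support_append_iff _ _ |>.mp hz with hz | hz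
  · exact hpT z (by simpa using hz)
  · exact hqT z hz

section Ball

variable [DecidableEq V] [G.LocallyFinite]

def walkBall (G : SimpleGraph V) [G.LocallyFinite] (c : V) : ℕ → Finset V
  | 0 => {c}
  | k + 1 => (G.walkBall c k).biUnion fun x ↦ insert x (G.neighborFinset x)

lemma card_walkBall_le {D : ℕ} (hD : ∀ v, G.degree v < D) (c : V) (k : ℕ) :
    (G.walkBall c k).card ≤ D ^ k := by
  induction k with
  | zero => simp [walkBall]
  | succ k ih =>
    calc (G.walkBall c (k + 1)).card
        ≤ ∑ x ∈ G.walkBall c k, (insert x (G.neighborFinset x)).card := card_biUnion_le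
      _ ≤ ∑ _x ∈ G.walkBall c k, D := sum_le_sum fun x _ ↦
          (card_insert_le _ _).trans (by rw [card_neighborFinset_eq_degree]; exact hD x)
      _ ≤ D ^ (k + 1) := by rw [sum_const, smul_eq_mul, pow_succ]; gcongr

lemma mem_walkBall {c x : V} {k : ℕ} (p : G.Walk x c) (hp : p.length ≤ k) :
    x ∈ G.walkBall c k := by
  induction k generalizing x with
  | zero => simp [walkBall, p.eq_of_length_eq_zero (Nat.le_zero.mp hp)]
  | succ k ih =>
    simp only [walkBall, mem_biUnion, mem_insert, mem_neighborFinset]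
    cases p with
    | nil => exact ⟨c, ih .nil (Nat.zero_le _), .inl rfl⟩
    | cons h q => exact ⟨_, ih q (by simp only [Walk.length_cons] at hp; omega), .inr h.symm⟩

end Ball

end SimpleGraph

namespace Paper

open SimpleGraph

lemma IsShallowMinor.cliqueFree_three {V W : Type*} {G : SimpleGraph V} {G' : SimpleGraph W}
    {r : ℕ} (hm : IsShallowMinor r G G') (hg : 6 * r + 3 < G.girth) : G'.CliqueFree 3 := by
  classical
  obtain ⟨S, -, hdisj, hrad, hadj⟩ := hm
  intro t ht
  obtain ⟨u, v, w, huv, huw, hvw, -⟩ := is3Clique_iff.mp ht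
  obtain ⟨a₁, ha₁, b₁, hb₁, hab⟩ := hadj u v huv
  obtain ⟨b₂, hb₂, c₁, hc₁, hbc⟩ := hadj v w hvw
  obtain ⟨c₂, hc₂, a₂, ha₂, hca⟩ := hadj w u huw.symm
  obtain ⟨pB, hlB, hsB⟩ := HasRadiusLE.exists_walk (hrad v) hb₁ hb₂
  obtain ⟨pC, hlC, hsC⟩ := HasRadiusLE.exists_walk (hrad w) hc₁ hc₂
  obtain ⟨pA, hlA, hsA⟩ := HasRadiusLE.exists_walk (hrad u) ha₂ ha₁
  -- The walk `b₁ ⇝ a₁` runs through `S v ∪ S w` and then through `S w ∪ S u`,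
  -- so it cannot use the edge `a₁b₁` from `S u` to `S v`.
  set Q₁ := pB.append (.cons hbc pC)
  set Q₂ := Walk.cons hca pA
  have hQ₁ : ∀ z ∈ Q₁.support, z ∈ S v ∪ S w := fun z hz ↦
    (Walk.mem_support_append_iff _ _ |>.mp hz).elim (fun hz ↦ .inl (hsB z hz))
      (Walk.support_cons_subset_union hbc hb₂ hsC z)
  have hQ₂ := Walk.support_cons_subset_union hca hc₂ hsA
  have hnot : s(a₁, b₁) ∉ (Q₁.append Q₂).edges := by
    rw [Walk.edges_append, List.mem_append]
    rintro (h | h)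
    · rcases hQ₁ a₁ (Q₁.fst_mem_support_of_mem_edges h) with h' | h'
      exacts [Set.disjoint_left.mp (hdisj huv.ne) ha₁ h',
        Set.disjoint_left.mp (hdisj huw.ne) ha₁ h']
    · rcases hQ₂ b₁ (Q₂.snd_mem_support_of_mem_edges h) with h' | h'
      exacts [Set.disjoint_left.mp (hdisj hvw.ne) hb₁ h',
        Set.disjoint_left.mp (hdisj huv.ne) h' hb₁]
  have := girth_le_length_add_one hab _ hnot
  simp only [Q₁, Q₂, Walk.length_append, Walk.length_cons] at this
  omega

lemma IsShallowMinor.card_clique_le_pow {V W : Type*} {G : SimpleGraph V} {G' : SimpleGraph W}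
    [DecidableEq V] [G.LocallyFinite] {r D : ℕ} (hm : IsShallowMinor r G G')
    (hD : ∀ v, G.degree v < D) {s : Finset W} (hs : G'.IsClique ↑s) :
    s.card ≤ D ^ (r + 1) := by
  obtain ⟨S, -, hdisj, hrad, hadj⟩ := hm
  obtain rfl | ⟨u, hu⟩ := s.eq_empty_or_nonempty
  · simp
  obtain ⟨c, hc, hball⟩ := hrad u
  have hmeet : ∀ w ∈ s, ∃ y ∈ S w, y ∈ G.walkBall c (r + 1) := by
    intro w hw
    obtain rfl | hwu := eq_or_ne w u
    · exact ⟨c, hc, mem_walkBall .nil (Nat.zero_le _)⟩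
    obtain ⟨x, hx, y, hy, hxy⟩ := hadj u w (hs hu hw hwu.symm)
    obtain ⟨p, hp, -⟩ := hball x hx
    refine ⟨y, hy, mem_walkBall (.cons hxy.symm p.reverse) ?_⟩
    simp only [Walk.length_cons, Walk.length_reverse]
    omega
  have : Nonempty V := ⟨c⟩
  choose! f hfS hfball using hmeet
  calc s.card ≤ (G.walkBall c (r + 1)).card :=
        card_le_card_of_injOn f hfball fun w hw w' hw' hf ↦ by
          by_contra hne
          exact Set.disjoint_left.mp (hdisj hne) (hfS w hw) (hf ▸ hfS w' hw')
    _ ≤ D ^ (r + 1) := card_walkBall_le hD c (r + 1)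

lemma subIndepNum_top {V : Type*} [Fintype V] (G : SimpleGraph V) :
    subIndepNum G ⊤ = indepNum G := by
  unfold subIndepNum indepNum
  congr! 4 with n s
  simp [IsIndepSet]

lemma hallRatio_nonneg_s19 {V : Type*} [Fintype V] (G : SimpleGraph V) : 0 ≤ hallRatio G :=
  Real.sSup_nonneg <| by rintro _ ⟨H, -, rfl⟩; positivity

lemma card_div_indepNum_le_hallRatio {V : Type*} [Fintype V] (G : SimpleGraph V) :
    (Fintype.card V : ℝ) / indepNum G ≤ hallRatio G := by
  cases isEmpty_or_nonempty V
  · simpa using hallRatio_nonneg_s19 G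
  refine le_csSup ⟨Fintype.card V, ?_⟩ ⟨⊤, Set.univ_nonempty, by simp [subIndepNum_top]⟩
  rintro _ ⟨H, -, rfl⟩
  have hcard : (H.verts.ncard : ℝ) ≤ Fintype.card V := by
    exact_mod_cast (Set.ncard_le_card _).trans_eq Nat.card_eq_fintype_card
  rcases Nat.eq_zero_or_pos (subIndepNum G H) with h | h
  · simp [h]
  · exact (div_le_self (by positivity) (by exact_mod_cast h)).trans hcard

theorem statement19_general (Gs : ℕ → Σ n : ℕ, SimpleGraph (Fin n))
    (F : ℕ → ℕ) (hF : Monotone F)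
    (hdeg : ∀ n : ℕ, ∀ v, (((Gs n).2.neighborSet v).ncard : ℕ) < F ((Gs n).2.girth))
    (halpha : ∀ c : ℝ, ∃ n : ℕ, c < ((Gs n).1 : ℝ) / (indepNum (Gs n).2 : ℝ)) :
    (∃ g : ℕ → ℕ, ∀ (r n m : ℕ) (G' : SimpleGraph (Fin m)),
      IsShallowMinor r (Gs n).2 G' →
      ∀ s : Finset (Fin m), G'.IsClique ↑s → s.card ≤ g r) ∧
    ∀ c : ℝ, ∃ n : ℕ, c < hallRatio (Gs n).2 := by
  classical
  refine ⟨⟨fun r ↦ max 2 (F (6 * r + 4) ^ (r + 1)), fun r n m G' hm s hs ↦ ?_⟩,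
    fun c ↦ ?_⟩
  · by_cases hg : 6 * r + 3 < (Gs n).2.girth
    · exact le_max_of_le_left <| Nat.le_of_lt_succ <|
        hs.card_lt_of_cliqueFree (hm.cliqueFree_three hg)
    · refine le_max_of_le_right (hm.card_clique_le_pow (fun v ↦ ?_) hs)
      rw [← card_neighborFinset_eq_degree, neighborFinset_def, ← Set.ncard_eq_toFinset_card']
      exact (hdeg n v).trans_le (hF (by omega))
  · obtain ⟨n, hn⟩ := halpha c
    exact ⟨n, hn.trans_le (by simpa using card_div_indepNum_le_hallRatio (Gs n).2)⟩

/-- any sequence of finite graphs `Gs` whose girths tend to infinity,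
whose maximum degree is bounded by a fixed non-decreasing function of the girth, and
with `|V(G_n)|/α(G_n) → ∞`, forms a class that is nowhere dense (shallow minors at
each depth `r` have clique number bounded by a function of `r`) but has unbounded
Hall ratio. -/
theorem statement19 (Gs : ℕ → Σ n : ℕ, SimpleGraph (Fin n))
    (F : ℕ → ℕ) (hF : Monotone F)
    (hgirth : ∀ k : ℕ, ∃ N : ℕ, ∀ n ≥ N, k < (Gs n).2.girth)
    (hdeg : ∀ n : ℕ, ∀ v, (((Gs n).2.neighborSet v).ncard : ℕ) < F ((Gs n).2.girth))
    (halpha : ∀ c : ℝ, ∃ n : ℕ, c < ((Gs n).1 : ℝ) / (indepNum (Gs n).2 : ℝ)) :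
    (∃ g : ℕ → ℕ, ∀ (r n m : ℕ) (G' : SimpleGraph (Fin m)),
      IsShallowMinor r (Gs n).2 G' →
      ∀ s : Finset (Fin m), G'.IsClique ↑s → s.card ≤ g r) ∧
    ∀ c : ℝ, ∃ n : ℕ, c < hallRatio (Gs n).2 :=
  statement19_general Gs F hF hdeg halpha

end Paper
end
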